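/- Let G = (V,E) be a directed mixed graph and let N = N(I(G)) be the DMG on V whose directed edge α→β is present if and only if α is a potential parent of β in I(G) and whose bidirected edge α↔β is present if and only if α and β are potential siblings in I(G). Then: (i) I(N) = I(G); (ii) N is a supergraph of every DMG G' on V with I(G') = I(G); and (iii) for any finite sequence of DMGs G₀ ⊆ G₁ ⊆ … ⊆ Gₘ (edge-set inclusions) with G₀ = G and Gₘ = N, every Gᵢ satisfies I(Gᵢ) = I(N). -/

import Mathlib

/-!
Directed mixed graphs (DMGs) with μ-separation, following
Mogensen & Hansen, "Markov equivalence of marginalized local independence graphs".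
-/

universe u

/-- A directed mixed graph on node set `V`: a set of directed edges (`dir a b`
meaning `a → b`) and a set of bidirected edges (`bi`, a symmetric relation since
bidirected edges are unordered pairs).  Loops are allowed. -/
structure DMG (V : Type u) where
  dir : V → V → Prop
  bi : V → V → Prop
  bi_symm : ∀ a b, bi a b → bi b a

namespace DMG

variable {V : Type u}

/-- A single step of a walk: an edge instance together with the direction in
which it is traversed (this records, in particular, orientations of loops).
A directed edge has a tail at its source and a head at its target; a bidirected
edge has heads at both endpoints. -/
inductive Step (G : DMG V) : V → V → Type u
  | dirF : ∀ {a b : V}, G.dir a b → Step G a b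
  | dirB : ∀ {a b : V}, G.dir b a → Step G a b
  | bid  : ∀ {a b : V}, G.bi a b → Step G a b

/-- Whether the step has a head (edge mark) at its start node. -/
def Step.headStart {G : DMG V} : ∀ {a b : V}, Step G a b → Bool
  | _, _, .dirF _ => false
  | _, _, .dirB _ => true
  | _, _, .bid _ => true

/-- Whether the step has a head (edge mark) at its end node. -/
def Step.headEnd {G : DMG V} : ∀ {a b : V}, Step G a b → Bool
  | _, _, .dirF _ => true
  | _, _, .dirB _ => false
  | _, _, .bid _ => true

/-- The step traverses a bidirected edge. -/
def Step.IsBid {G : DMG V} {a b : V} : Step G a b → Prop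
  | .bid _ => True
  | _ => False

/-- The step traverses a directed edge, forwards. -/
def Step.IsDirF {G : DMG V} {a b : V} : Step G a b → Prop
  | .dirF _ => True
  | _ => False

/-- The underlying edge of a step: a directed edge is the ordered pair
(tail, head); a bidirected edge is the unordered pair of its endpoints. -/
def Step.edge {G : DMG V} : ∀ {a b : V}, Step G a b → (V × V) ⊕ (Sym2 V)
  | a, b, .dirF _ => Sum.inl (a, b)
  | a, b, .dirB _ => Sum.inl (b, a)
  | a, b, .bid _ => Sum.inr s(a, b)

/-- A walk in a DMG: an alternating sequence of nodes and edges, each edge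
between its neighbouring nodes, with a chosen orientation of each edge
(in particular of each directed loop). -/
inductive Walk (G : DMG V) : V → V → Type u
  | nil (a : V) : Walk G a a
  | cons {a b c : V} (s : Step G a b) (w : Walk G b c) : Walk G a c

namespace Walk

variable {G : DMG V}

/-- A nontrivial walk contains at least one edge. -/
def Nontrivial : ∀ {a b : V}, Walk G a b → Prop
  | _, _, .nil _ => False
  | _, _, .cons _ _ => True

/-- The list of nodes of a walk, in order (with multiplicity). -/
def nodes : ∀ {a b : V}, Walk G a b → List V
  | a, _, .nil _ => [a]
  | a, _, .cons _ w => a :: w.nodes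

/-- The non-endpoint (internal) nodes of a walk, in order (with multiplicity). -/
def interior {a b : V} (w : Walk G a b) : List V :=
  (w.nodes.dropLast).drop 1

/-- The list of edges of a walk. -/
def edges : ∀ {a b : V}, Walk G a b → List ((V × V) ⊕ (Sym2 V))
  | _, _, .nil _ => []
  | _, _, .cons s w => s.edge :: w.edges

/-- Whether the first edge of the walk has a head at the first node
(`false` for a trivial walk). -/
def firstHead : ∀ {a b : V}, Walk G a b → Bool
  | _, _, .nil _ => false
  | _, _, .cons s _ => s.headStart

/-- Whether the last edge of the walk has a head at the last node
(`false` for a trivial walk). -/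
def lastHead : ∀ {a b : V}, Walk G a b → Bool
  | _, _, .nil _ => false
  | _, _, .cons s (.nil _) => s.headEnd
  | _, _, .cons _ (.cons t w) => lastHead (Walk.cons t w)

/-- Helper: conditions at all remaining internal node instances of a walk,
where `h` records whether the edge arriving at the current start node has a
head there.  A node instance is a collider if both adjoining edges have a
head at it; a collider must lie in `Anc`, a noncollider must avoid `C`. -/
def openFrom (C Anc : Set V) : ∀ {a b : V}, Bool → Walk G a b → Prop
  | _, _, _, .nil _ => True
  | a, _, h, .cons s w =>
      (if h && s.headStart then a ∈ Anc else a ∉ C) ∧ openFrom C Anc s.headEnd w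

/-- Helper: every remaining internal node instance which is a collider lies in `S`. -/
def collInFrom (S : Set V) : ∀ {a b : V}, Bool → Walk G a b → Prop
  | _, _, _, .nil _ => True
  | a, _, h, .cons s w =>
      ((h && s.headStart) = true → a ∈ S) ∧ collInFrom S s.headEnd w

/-- Every collider (internal node instance with heads on both sides) of the
walk lies in `S`. -/
def CollidersIn (S : Set V) : ∀ {a b : V}, Walk G a b → Prop
  | _, _, .nil _ => True
  | _, _, .cons s w => collInFrom S s.headEnd w

/-- The walk has no colliders. -/
def NoColliders {a b : V} (w : Walk G a b) : Prop :=
  w.CollidersIn ∅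

/-- Helper: every remaining internal node instance is a collider. -/
def allCollFrom : ∀ {a b : V}, Bool → Walk G a b → Prop
  | _, _, _, .nil _ => True
  | _, _, h, .cons s w => (h && s.headStart) = true ∧ allCollFrom s.headEnd w

/-- Every internal node instance of the walk is a collider (no noncolliders). -/
def AllColliders : ∀ {a b : V}, Walk G a b → Prop
  | _, _, .nil _ => True
  | _, _, .cons s w => allCollFrom s.headEnd w

/-- Every edge of the walk is bidirected. -/
def AllBid : ∀ {a b : V}, Walk G a b → Prop
  | _, _, .nil _ => True
  | _, _, .cons s w => s.IsBid ∧ w.AllBid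

/-- The walk consists of a directed first edge (pointing forwards) followed by
bidirected edges only (the form `α → β` or `α → γ₁ ↔ ⋯ ↔ γₙ ↔ β`). -/
def UniForm : ∀ {a b : V}, Walk G a b → Prop
  | _, _, .nil _ => False
  | _, _, .cons s w => s.IsDirF ∧ w.AllBid

end Walk

/-- `a` is an ancestor of `b`: there is a (possibly trivial) directed path
from `a` to `b`. -/
def anc (G : DMG V) (a b : V) : Prop := Relation.ReflTransGen G.dir a b

/-- The set of ancestors of nodes of `C`. -/
def anSet (G : DMG V) (C : Set V) : Set V := {a | ∃ c ∈ C, G.anc a c}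

/-- The walk is μ-connecting given `C`: it is nontrivial, its first node is not
in `C`, every collider lies in `An(C)`, no noncollider lies in `C`, and its
final edge has a head at the final node. -/
def Walk.MuConn {G : DMG V} (C : Set V) : ∀ {a b : V}, Walk G a b → Prop
  | _, _, .nil _ => False
  | a, _, .cons s w =>
      a ∉ C ∧ Walk.openFrom C (G.anSet C) s.headEnd w ∧ (Walk.cons s w).lastHead = true

/-- `B` is μ-separated from `A` given `C` in `G`: there is no μ-connecting
walk from any node of `A` to any node of `B` given `C`. -/
def muSep (G : DMG V) (A B C : Set V) : Prop :=
  ∀ ⦃a b : V⦄, a ∈ A → b ∈ B → ∀ w : Walk G a b, ¬ w.MuConn C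

/-- Two DMGs on the same node set are Markov equivalent: they induce the same
independence model via μ-separation, i.e. `I(G₁) = I(G₂)`. -/
def MarkovEq (G₁ G₂ : DMG V) : Prop :=
  ∀ A B C : Set V, muSep G₁ A B C ↔ muSep G₂ A B C

/-- `b` is separable from `a` in `I(G)`: there is `C ⊆ V ∖ {a}` with
`⟨{a},{b} | C⟩ ∈ I(G)`. -/
def separable (G : DMG V) (a b : V) : Prop :=
  ∃ C : Set V, a ∉ C ∧ muSep G {a} {b} C

/-- `a ∈ u(b, I(G))`: `b` is inseparable from `a` in `I(G)`. -/
def inU (G : DMG V) (a b : V) : Prop := ¬ G.separable a b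

/-- `G₁` is a subgraph of `G₂` (same node set, edge-set inclusion). -/
def Sub (G₁ G₂ : DMG V) : Prop :=
  (∀ a b, G₁.dir a b → G₂.dir a b) ∧ (∀ a b, G₁.bi a b → G₂.bi a b)

/-- The DMG obtained by adding the directed edge `a → b`. -/
def addDir (G : DMG V) (a b : V) : DMG V where
  dir x y := G.dir x y ∨ (x = a ∧ y = b)
  bi := G.bi
  bi_symm := G.bi_symm

/-- The DMG obtained by adding the bidirected edge `a ↔ b`. -/
def addBi (G : DMG V) (a b : V) : DMG V where
  dir := G.dir
  bi x y := G.bi x y ∨ (x = a ∧ y = b) ∨ (x = b ∧ y = a)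
  bi_symm x y h := by
    rcases h with h | h | h
    · exact Or.inl (G.bi_symm _ _ h)
    · exact Or.inr (Or.inr ⟨h.2, h.1⟩)
    · exact Or.inr (Or.inl ⟨h.2, h.1⟩)

/-- The DMG obtained by removing the directed edge `a → b`. -/
def removeDir (G : DMG V) (a b : V) : DMG V where
  dir x y := G.dir x y ∧ ¬(x = a ∧ y = b)
  bi := G.bi
  bi_symm := G.bi_symm

/-- The DMG obtained by removing the bidirected edge `a ↔ b`. -/
def removeBi (G : DMG V) (a b : V) : DMG V where
  dir := G.dir
  bi x y := G.bi x y ∧ ¬((x = a ∧ y = b) ∨ (x = b ∧ y = a))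
  bi_symm x y h := ⟨G.bi_symm _ _ h.1, fun hc => h.2 (by tauto)⟩

/-- The complete DMG: all directed and all bidirected edges present. -/
def IsComplete (G : DMG V) : Prop :=
  (∀ a b, G.dir a b) ∧ (∀ a b, G.bi a b)

/-- A DMG is maximal if it is complete, or adding any (absent) edge changes the
induced independence model. -/
def IsMaximal (G : DMG V) : Prop :=
  G.IsComplete ∨
    ∀ a b : V, (¬ G.dir a b → ¬ MarkovEq (G.addDir a b) G) ∧
      (¬ G.bi a b → ¬ MarkovEq (G.addBi a b) G)

end DMG
namespace DMG

variable {V : Type u}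

/-- An inducing path from `a` to `b`: a nontrivial path or cycle from `a` to
`b` with a head at `b`, with no noncolliders, and on which every node is an
ancestor of `a` or of `b`. -/
def IsInducingPath (G : DMG V) {a b : V} (w : Walk G a b) : Prop :=
  w.Nontrivial ∧
  (w.nodes.Nodup ∨ (a = b ∧ w.nodes.dropLast.Nodup)) ∧
  w.lastHead = true ∧
  w.AllColliders ∧
  ∀ x ∈ w.nodes, G.anc x a ∨ G.anc x b

/-- A bidirected inducing path: an inducing path all of whose edges are bidirected. -/
def IsBidirectedIP (G : DMG V) {a b : V} (w : Walk G a b) : Prop :=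
  G.IsInducingPath w ∧ w.AllBid

/-- A directed inducing path: an inducing path of the form `α → β` or
`α → γ₁ ↔ ⋯ ↔ γₙ ↔ β` with every `γᵢ` an ancestor of `β`. -/
def IsDirectedIP (G : DMG V) {a b : V} (w : Walk G a b) : Prop :=
  G.IsInducingPath w ∧ w.UniForm ∧ ∀ x ∈ w.interior, G.anc x b

/-- There exists a nontrivial walk in `G` between `x` and `y` with no
colliders, all non-endpoint nodes in `M`, and with edge marks `hs` at `x`
(`true` = head) and `he` at `y`. -/
def ConnThrough (G : DMG V) (M : Set V) (x y : V) (hs he : Bool) : Prop :=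
  ∃ w : Walk G x y, w.Nontrivial ∧ w.NoColliders ∧
    (∀ z ∈ w.interior, z ∈ M) ∧ w.firstHead = hs ∧ w.lastHead = he

/-- The latent projection `m(G, O)` of `G` on `O`: the DMG on node set `O`
having an edge (with given endpoint marks) between `α` and `β` if and only if
`G` contains a nontrivial endpoint-identical walk between `α` and `β` with no
colliders and all non-endpoint nodes in `M = V ∖ O`. -/
def latentProj (G : DMG V) (O : Set V) : DMG {x : V // x ∈ O} where
  dir x y := ConnThrough G Oᶜ x.1 y.1 false true
  bi x y := ConnThrough G Oᶜ x.1 y.1 true true ∨ ConnThrough G Oᶜ y.1 x.1 true true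
  bi_symm x y h := h.symm

/-- `x` is directedly collider-connected to `b`: there is a nontrivial walk
from `x` to `b` with a head at `b` on which every non-endpoint node is a
collider. -/
def dirCollConn (G : DMG V) (x b : V) : Prop :=
  ∃ w : Walk G x b, w.Nontrivial ∧ w.AllColliders ∧ w.lastHead = true

/-- The set `D(a,b)` of nodes in `An({a,b})` directedly collider-connected to
`b`, except `a`. -/
def Dset (G : DMG V) (a b : V) : Set V :=
  {x | x ∈ G.anSet {a, b} ∧ G.dirCollConn x b} \ {a}

/-- `a` and `b` are potential siblings in the independence model `I(G)`. -/
def PotSib (G : DMG V) (a b : V) : Prop :=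
  (G.inU b a ∧ G.inU a b) ∧
  (∀ (γ : V) (C : Set V), b ∈ C → muSep G {γ} {a} C → muSep G {γ} {b} C) ∧
  (∀ (γ : V) (C : Set V), a ∈ C → muSep G {γ} {b} C → muSep G {γ} {a} C)

/-- `a` is a potential parent of `b` in the independence model `I(G)`. -/
def PotPar (G : DMG V) (a b : V) : Prop :=
  G.inU a b ∧
  (∀ (γ : V) (C : Set V), a ∉ C → muSep G {γ} {b} C → muSep G {γ} {a} C) ∧
  (∀ (γ δ : V) (C : Set V), a ∉ C → b ∈ C →
    muSep G {γ} {δ} C → muSep G {γ} {b} C ∨ muSep G {a} {δ} C) ∧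
  (∀ (γ : V) (C : Set V), a ∉ C → muSep G {b} {γ} C → muSep G {b} {γ} (C ∪ {a}))

/-- The graph `N(I(G))`: directed edge `a → b` present iff `a` is a potential
parent of `b` in `I(G)`, bidirected edge `a ↔ b` present iff `a` and `b` are
potential siblings in `I(G)` (potential siblinghood is symmetric). -/
def NGraph (G : DMG V) : DMG V where
  dir a b := G.PotPar a b
  bi a b := G.PotSib a b ∨ G.PotSib b a
  bi_symm _ _ h := h.symm

/-- A path is m-connecting given `C` if it is a path (no repeated nodes), no
noncollider on it is in `C` and every collider on it is in `An(C)`. -/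
def Walk.MConn {G : DMG V} (C : Set V) : ∀ {a b : V}, Walk G a b → Prop
  | _, _, .nil _ => True
  | _, _, .cons s w =>
      (Walk.cons s w).nodes.Nodup ∧ Walk.openFrom C (G.anSet C) s.headEnd w

/-- `A` and `B` are m-separated by `C`: there is no m-connecting path between
a node of `A` and a node of `B` given `C`. -/
def mSep (G : DMG V) (A B C : Set V) : Prop :=
  ∀ ⦃a b : V⦄, a ∈ A → b ∈ B →
    (∀ w : Walk G a b, ¬ w.MConn C) ∧ (∀ w : Walk G b a, ¬ w.MConn C)

/-- Auxiliary directed-edge relation of the `B`-history version of `G`. -/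
def histDir (G : DMG V) (B : Set V) : (V ⊕ {x : V // x ∈ B}) → (V ⊕ {x : V // x ∈ B}) → Prop
  | .inl u, .inl v => G.dir u v
  | .inl u, .inr v => G.dir u v.1
  | _, _ => False

/-- Auxiliary bidirected-edge relation of the `B`-history version of `G`. -/
def histBi (G : DMG V) (B : Set V) : (V ⊕ {x : V // x ∈ B}) → (V ⊕ {x : V // x ∈ B}) → Prop
  | .inl u, .inl v => G.bi u v
  | .inl u, .inr v => G.bi u v.1
  | .inr u, .inl v => G.bi u.1 v
  | .inr _, .inr _ => False

/-- The `B`-history version `G(B)` of `G`: node set `V ⊔ Bᵖ`, whose subgraph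
on `V` is `G`, with additionally `α ↔ βᵖ` whenever `α ↔ β` in `G` and
`α → βᵖ` whenever `α → β` in `G` (for `α ∈ V`, `β ∈ B`). -/
def hist (G : DMG V) (B : Set V) : DMG (V ⊕ {x : V // x ∈ B}) where
  dir := G.histDir B
  bi := G.histBi B
  bi_symm x y h := by
    cases x <;> cases y <;>
      simp only [histBi] at h ⊢ <;>
      first
        | exact G.bi_symm _ _ h
        | exact h

end DMG

/-!
Every edge of `G` is a potential edge, and potential parenthood and siblinghood depend on `G`
only through `I(G)`; this gives (ii). For (i) the potential edges are added one at a time, so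
everything rests on the fact that adding a single potential edge creates no new μ-connecting
walk. A walk of the enlarged graph is rebuilt into a walk of `G` from its start onwards: a use of
the new edge is replaced by a μ-connecting walk between its endpoints, which exists by
inseparability, and where that would break the walk at an endpoint the prefix is rerouted using
(s2)/(s3), resp. (p2). Adding `a → b` also makes the ancestors of `a` ancestors of `C` when `b` is
one; colliders that are only ancestors of `a` are removed by restarting the walk at `a`, and the
two pieces are reconnected through (p3) and (p4). Finally (iii) holds because μ-separation is
antitone in the edge set.
-/

namespace DMG

variable {V : Type u}

/-- The condition that `Walk.openFrom` imposes at a node `x` entered with mark `m` and left with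
mark `n` (`true` = head). -/
def NodeOpen (C A : Set V) (x : V) (m n : Bool) : Prop :=
  if m && n then x ∈ A else x ∉ C

section NodeOpen

variable {C A : Set V} {x : V} {m n : Bool}

theorem NodeOpen.comm : NodeOpen C A x m n ↔ NodeOpen C A x n m := by
  rw [NodeOpen, NodeOpen, Bool.and_comm]

theorem nodeOpen_false_left : NodeOpen C A x false n ↔ x ∉ C := by
  simp [NodeOpen]

theorem nodeOpen_false_right : NodeOpen C A x m false ↔ x ∉ C := by
  simp [NodeOpen]

theorem nodeOpen_of_not_mem (hC : x ∉ C) (hA : (m && n) = true → x ∈ A) :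
    NodeOpen C A x m n := by
  unfold NodeOpen
  split_ifs with h
  exacts [hA h, hC]

theorem nodeOpen_of_collider (hc : (m && n) = true) (hA : x ∈ A) : NodeOpen C A x m n := by
  rw [NodeOpen, if_pos hc]
  exact hA

theorem NodeOpen.mono {A' : Set V} (hA : A ⊆ A') (h : NodeOpen C A x m n) :
    NodeOpen C A' x m n := by
  unfold NodeOpen at *
  split_ifs at * with hc
  exacts [hA h, h]

theorem NodeOpen.of_union {C' B : Set V} (hC : C ⊆ C') (h : NodeOpen C' (A ∪ B) x m n) :
    NodeOpen C A x m n ∨ ((m && n) = true ∧ x ∈ B ∧ x ∉ A) := by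
  unfold NodeOpen at *
  split_ifs at * with hc
  · by_cases hxA : x ∈ A
    · exact Or.inl hxA
    · exact Or.inr ⟨hc, h.resolve_left hxA, hxA⟩
  · exact Or.inl fun hx => h (hC hx)

end NodeOpen

section Reverse

variable {G : DMG V} {x y : V}

def Step.reverse : Step G x y → Step G y x
  | .dirF h => .dirB h
  | .dirB h => .dirF h
  | .bid h => .bid (G.bi_symm _ _ h)

theorem Step.headStart_reverse (s : Step G x y) : s.reverse.headStart = s.headEnd := by
  cases s <;> rfl

theorem Step.headEnd_reverse (s : Step G x y) : s.reverse.headEnd = s.headStart := by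
  cases s <;> rfl

end Reverse

namespace Walk

variable {G : DMG V} {C A : Set V} {x y z a : V}

/-- The mark with which a walk arrives at its last node; `m` for the trivial walk. -/
def endHead : ∀ {x y : V}, Walk G x y → Bool → Bool
  | _, _, .nil _, m => m
  | _, _, .cons s w, _ => w.endHead s.headEnd

def append : ∀ {x y z : V}, Walk G x y → Walk G y z → Walk G x z
  | _, _, _, .nil _, w => w
  | _, _, _, .cons s v, w => .cons s (v.append w)

theorem lastHead_cons (s : Step G x y) (w : Walk G y z) :
    (cons s w).lastHead = w.endHead s.headEnd := by
  induction w generalizing x with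
  | nil => rfl
  | cons t w ih => exact ih t

theorem endHead_append (v : Walk G x y) (w : Walk G y z) (m : Bool) :
    (v.append w).endHead m = w.endHead (v.endHead m) := by
  induction v generalizing m with
  | nil => rfl
  | cons s v ih => exact ih w _

theorem openFrom_cons_iff {m : Bool} (s : Step G x y) (w : Walk G y z) :
    openFrom C A m (cons s w) ↔ NodeOpen C A x m s.headStart ∧ openFrom C A s.headEnd w :=
  Iff.rfl

theorem openFrom_append (v : Walk G x y) (w : Walk G y z) (m : Bool) :
    openFrom C A m (v.append w) ↔ openFrom C A m v ∧ openFrom C A (v.endHead m) w := by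
  induction v generalizing m with
  | nil => simp [append, openFrom, endHead]
  | cons s v ih =>
    simp only [append, openFrom_cons_iff, ih, endHead, and_assoc]

theorem openFrom_mono {A' : Set V} (hA : A ⊆ A') {m : Bool} (w : Walk G x y)
    (hw : openFrom C A m w) : openFrom C A' m w := by
  induction w generalizing m with
  | nil => trivial
  | cons s w ih => exact ⟨NodeOpen.mono hA hw.1, ih hw.2⟩

theorem openFrom_induction {R : V → Bool → Prop}
    (hR : ∀ {x y : V} (s : Step G x y) (m : Bool), R x m → NodeOpen C A x m s.headStart →
      R y s.headEnd) (w : Walk G x y) {m : Bool} (hx : R x m) (hw : openFrom C A m w) :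
    R y (w.endHead m) := by
  induction w generalizing m with
  | nil => exact hx
  | cons s w ih => exact ih (hR s m hx hw.1) hw.2

theorem muConn_iff (w : Walk G x y) :
    w.MuConn C ↔ openFrom C (G.anSet C) false w ∧ w.endHead false = true := by
  cases w with
  | nil => simp [MuConn, endHead]
  | cons s w =>
    simp only [MuConn, lastHead_cons, openFrom_cons_iff, nodeOpen_false_left, endHead, and_assoc]

theorem not_mem_of_openFrom {w : Walk G x y} (hw : openFrom C A false w)
    (he : w.endHead false = true) : x ∉ C := by
  cases w with
  | nil => exact absurd he Bool.false_ne_true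
  | cons s w => exact nodeOpen_false_left.mp hw.1

theorem openFrom_of_mem_of_not_mem {w : Walk G x y} (hA : x ∈ A) (hC : x ∉ C)
    (hw : openFrom C A false w) (he : w.endHead false = true) (m : Bool) :
    openFrom C A m w ∧ w.endHead m = true := by
  cases w with
  | nil => exact absurd he Bool.false_ne_true
  | cons s w => exact ⟨⟨nodeOpen_of_not_mem hC fun _ => hA, hw.2⟩, he⟩

def reverse : ∀ {x y : V}, Walk G x y → Walk G y x
  | _, _, .nil x => .nil x
  | _, _, .cons s w => w.reverse.append (.cons s.reverse (.nil _))

theorem openFrom_reverse (w : Walk G x y) (m n : Bool) (hw : openFrom C A m w)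
    (hy : NodeOpen C A y (w.endHead m) n) :
    openFrom C A n w.reverse ∧ NodeOpen C A x (w.reverse.endHead n) m := by
  induction w generalizing m n with
  | nil => exact ⟨trivial, NodeOpen.comm.mp hy⟩
  | cons s w ih =>
    obtain ⟨hw', hz⟩ := ih s.headEnd n hw.2 hy
    simp only [reverse, openFrom_append, endHead_append, openFrom_cons_iff,
      Step.headStart_reverse, endHead, Step.headEnd_reverse]
    exact ⟨⟨hw', hz, trivial⟩, NodeOpen.comm.mp hw.1⟩

theorem dropLast_nodes_cons (s : Step G x y) (w : Walk G y z) :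
    (cons s w).nodes.dropLast = x :: w.nodes.dropLast := by
  cases w <;> rfl

theorem openFrom_union_singleton {A' : Set V} (hA : A ⊆ A') {m : Bool} (w : Walk G x y)
    (hw : openFrom C A m w) (ha : a ∉ w.nodes.dropLast) : openFrom (C ∪ {a}) A' m w := by
  induction w generalizing m with
  | nil => trivial
  | cons s w ih =>
    rw [dropLast_nodes_cons, List.mem_cons, not_or] at ha
    refine ⟨?_, ih hw.2 ha.2⟩
    have h1 := NodeOpen.mono hA hw.1
    show NodeOpen _ _ _ _ _
    unfold NodeOpen at h1 ⊢
    split_ifs at * with hc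
    · exact h1
    · rintro (hx | hx)
      exacts [h1 hx, ha.1 hx.symm]

theorem exists_prefix_avoiding {m : Bool} (w : Walk G x a) (hw : openFrom C A m w) :
    ∃ w' : Walk G x a, openFrom C A m w' ∧ a ∉ w'.nodes.dropLast := by
  induction w generalizing m with
  | nil => exact ⟨nil _, trivial, by simp [nodes]⟩
  | @cons x y a s w ih =>
    by_cases hx : x = a
    · subst hx
      exact ⟨nil _, trivial, by simp [nodes]⟩
    · obtain ⟨w', hw', ha⟩ := ih hw.2
      refine ⟨cons s w', ⟨hw.1, hw'⟩, ?_⟩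
      rw [dropLast_nodes_cons, List.mem_cons, not_or]
      exact ⟨Ne.symm hx, ha⟩

theorem avoiding_or_exists_suffix {m : Bool} (w : Walk G x z) (hw : openFrom C A m w) :
    a ∉ w.nodes.dropLast ∨ ∃ (y : V) (t : Step G a y) (w' : Walk G y z),
      openFrom C A t.headEnd w' ∧ w'.endHead t.headEnd = w.endHead m ∧
        a ∉ w'.nodes.dropLast := by
  induction w generalizing m with
  | nil => exact Or.inl (by simp [nodes])
  | @cons x y z s w ih =>
    rcases ih hw.2 with ha | hsuffix
    · by_cases hx : x = a
      · subst hx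
        exact Or.inr ⟨y, s, w, hw.2, rfl, ha⟩
      · left
        rw [dropLast_nodes_cons, List.mem_cons, not_or]
        exact ⟨Ne.symm hx, ha⟩
    · exact Or.inr hsuffix

end Walk

/-- Some walk from `x` to `y` is open given `C`, with colliders in `A`, at all its nodes but `y`
(the start counting as a noncollider), and arrives at `y` with mark `m`. -/
def Reach (G : DMG V) (C A : Set V) (x y : V) (m : Bool) : Prop :=
  ∃ w : Walk G x y, Walk.openFrom C A false w ∧ w.endHead false = m

abbrev MuConnected (G : DMG V) (C : Set V) (x y : V) : Prop :=
  G.Reach C (G.anSet C) x y true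

namespace Reach

variable {G : DMG V} {C A : Set V} {x y z : V} {m : Bool}

theorem refl (G : DMG V) (C A : Set V) (x : V) : G.Reach C A x x false :=
  ⟨.nil x, trivial, rfl⟩

theorem append (h : G.Reach C A x y m) (w : Walk G y z) (hw : Walk.openFrom C A m w) :
    G.Reach C A x z (w.endHead m) := by
  obtain ⟨v, hv, rfl⟩ := h
  exact ⟨v.append w, (Walk.openFrom_append v w false).mpr ⟨hv, hw⟩,
    Walk.endHead_append v w false⟩

theorem step (h : G.Reach C A x y m) (s : Step G y z) (hy : NodeOpen C A y m s.headStart) :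
    G.Reach C A x z s.headEnd :=
  h.append (.cons s (.nil z)) ⟨hy, trivial⟩

theorem not_mem (h : G.Reach C A x y true) : x ∉ C :=
  let ⟨_, hw, he⟩ := h
  Walk.not_mem_of_openFrom hw he

theorem append_cons {z' : V} (h : G.Reach C A x y m) (s : Step G y z) (w : Walk G z z')
    (hy : NodeOpen C A y m s.headStart) (hw : Walk.openFrom C A s.headEnd w)
    (he : w.endHead s.headEnd = true) : G.Reach C A x z' true :=
  he ▸ h.append (.cons s w) ⟨hy, hw⟩

theorem trans (h : G.Reach C A x y m) (h' : G.Reach C A y z true) (hy : m = true → y ∈ A) :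
    G.Reach C A x z true := by
  obtain ⟨w, hw, he⟩ := h'
  cases w with
  | nil => exact absurd he Bool.false_ne_true
  | cons s w =>
    exact h.append_cons s w (nodeOpen_of_not_mem (nodeOpen_false_left.mp hw.1)
      fun hc => hy (by simp_all)) hw.2 he

theorem mono {A' : Set V} (hA : A ⊆ A') (h : G.Reach C A x y m) : G.Reach C A' x y m :=
  let ⟨w, hw, he⟩ := h
  ⟨w, Walk.openFrom_mono hA w hw, he⟩

end Reach

section Ancestors

variable {G H : DMG V} {C : Set V} {x y a b : V}

theorem subset_anSet (C : Set V) : C ⊆ G.anSet C := fun c hc => ⟨c, hc, .refl⟩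

theorem anc_mem_anSet (h : G.anc x y) (hy : y ∈ G.anSet C) : x ∈ G.anSet C :=
  let ⟨c, hc, hyc⟩ := hy
  ⟨c, hc, h.trans hyc⟩

theorem anSet_mono (hs : Sub G H) (C : Set V) : G.anSet C ⊆ H.anSet C :=
  fun _ ⟨c, hc, h⟩ => ⟨c, hc, Relation.ReflTransGen.mono hs.1 _ _ h⟩

theorem anSet_union_singleton (C : Set V) (a : V) :
    G.anSet (C ∪ {a}) = G.anSet C ∪ {z | G.anc z a} := by
  ext z
  simp only [anSet, Set.mem_union, Set.mem_singleton_iff, Set.mem_ofPred_eq]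
  constructor
  · rintro ⟨c, hc | rfl, h⟩
    exacts [Or.inl ⟨c, hc, h⟩, Or.inr h]
  · rintro (⟨c, hc, h⟩ | h)
    exacts [⟨c, Or.inl hc, h⟩, ⟨a, Or.inr rfl, h⟩]

theorem sub_addDir (G : DMG V) (a b : V) : Sub G (G.addDir a b) :=
  ⟨fun _ _ => Or.inl, fun _ _ => id⟩

theorem sub_addBi (G : DMG V) (a b : V) : Sub G (G.addBi a b) :=
  ⟨fun _ _ => id, fun _ _ => Or.inl⟩

theorem anSet_addDir_subset (C : Set V) :
    (G.addDir a b).anSet C ⊆ G.anSet C ∪ {z | G.anc z a} := by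
  rintro x ⟨c, hc, h⟩
  induction h using Relation.ReflTransGen.head_induction_on with
  | refl => exact Or.inl ⟨c, hc, .refl⟩
  | head hd _ ih =>
    rcases hd with hd | ⟨rfl, rfl⟩
    · exact ih.imp (fun hc' => anc_mem_anSet (.single hd) hc') (Relation.ReflTransGen.head hd)
    · exact Or.inr .refl

theorem mem_anSet_addDir (hb : b ∈ G.anSet C) : a ∈ (G.addDir a b).anSet C :=
  anc_mem_anSet (.single (Or.inr ⟨rfl, rfl⟩)) (anSet_mono (sub_addDir G a b) C hb)

theorem anSet_mono_right {C' : Set V} (h : C ⊆ C') : G.anSet C ⊆ G.anSet C' :=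
  fun _ ⟨c, hc, hxc⟩ => ⟨c, h hc, hxc⟩

theorem anSet_addDir_of_not_mem (hb : b ∉ G.anSet C) :
    (G.addDir a b).anSet C = G.anSet C := by
  refine (Set.Subset.antisymm ?_ (anSet_mono (sub_addDir G a b) C))
  rintro x ⟨c, hc, h⟩
  induction h using Relation.ReflTransGen.head_induction_on with
  | refl => exact ⟨c, hc, .refl⟩
  | head hd _ ih =>
    rcases hd with hd | ⟨rfl, rfl⟩
    · exact anc_mem_anSet (.single hd) ih
    · exact absurd ih hb

end Ancestors

section Paths

variable {G : DMG V} {C A : Set V} {x y a : V}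

theorem Reach.dirPath (h : G.Reach C A y x true) (hxa : G.anc x a) (hx : x ∉ G.anSet C) :
    G.Reach C A y a true := by
  induction hxa using Relation.ReflTransGen.head_induction_on with
  | refl => exact h
  | head hd _ ih =>
    exact ih (h.step (.dirF hd) (nodeOpen_false_right.mpr fun hc => hx (subset_anSet C hc)))
      fun hc => hx (anc_mem_anSet (.single hd) hc)

theorem Reach.revDirPath (h : G.Reach C A y a false) (hxa : G.anc x a) (hx : x ∉ G.anSet C) :
    G.Reach C A y x false := by
  induction hxa using Relation.ReflTransGen.head_induction_on with
  | refl => exact h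
  | @head x x' hd hx'a ih =>
    have hx' : x' ∉ G.anSet C := fun hc => hx (anc_mem_anSet (.single hd) hc)
    exact (ih hx').step (.dirB hd) (nodeOpen_false_left.mpr fun hc => hx' (subset_anSet C hc))

end Paths

section Separation

variable {G H : DMG V} {C : Set V} {x y : V}

theorem muSep_iff (A B : Set V) :
    G.muSep A B C ↔ ∀ x ∈ A, ∀ y ∈ B, ¬ G.MuConnected C x y := by
  simp only [muSep, MuConnected, Reach, Walk.muConn_iff, not_exists]
  exact ⟨fun h x hx y hy w => h hx hy w, fun h x y hx hy w => h x hx y hy w⟩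

theorem muSep_singleton : G.muSep {x} {y} C ↔ ¬ G.MuConnected C x y := by
  simp [muSep_iff]

theorem Reach.of_sub (hs : Sub G H) {A : Set V} {m : Bool} (h : G.Reach C A x y m) :
    H.Reach C A x y m := by
  obtain ⟨w, hw, rfl⟩ := h
  refine Walk.openFrom_induction (R := H.Reach C A x) (fun s m hR hx => ?_) w (.refl H C A x) hw
  cases s with
  | dirF h => exact hR.step (.dirF (hs.1 _ _ h)) hx
  | dirB h => exact hR.step (.dirB (hs.1 _ _ h)) hx
  | bid h => exact hR.step (.bid (hs.2 _ _ h)) hx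

theorem MuConnected.of_sub (hs : Sub G H) (h : G.MuConnected C x y) : H.MuConnected C x y :=
  (Reach.of_sub hs h).mono (anSet_mono hs C)

theorem muSep_anti (hs : Sub G H) {A B : Set V} (h : H.muSep A B C) : G.muSep A B C := by
  rw [muSep_iff] at *
  exact fun x hx y hy hxy => h x hx y hy (hxy.of_sub hs)

theorem markovEq_of_sub (hs : Sub G H)
    (h : ∀ C x y, H.MuConnected C x y → G.MuConnected C x y) : MarkovEq H G := by
  intro A B C
  simp only [muSep_iff]
  exact ⟨fun hH x hx y hy hG => hH x hx y hy (hG.of_sub hs),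
    fun hG x hx y hy hH => hG x hx y hy (h C x y hH)⟩

theorem MarkovEq.symm (h : MarkovEq G H) : MarkovEq H G := fun A B C => (h A B C).symm

theorem MarkovEq.trans {K : DMG V} (h : MarkovEq G H) (h' : MarkovEq H K) : MarkovEq G K :=
  fun A B C => (h A B C).trans (h' A B C)

theorem MarkovEq.of_sub_of_sub {K : DMG V} (hGH : Sub G H) (hHK : Sub H K) (h : MarkovEq K G) :
    MarkovEq H G :=
  fun A B C => ⟨muSep_anti hGH, fun hG => muSep_anti hHK ((h A B C).mpr hG)⟩

end Separation

section Potential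

variable {G : DMG V} {a b : V}

theorem inU_iff : G.inU a b ↔ ∀ C, a ∉ C → G.MuConnected C a b := by
  simp [inU, separable, muSep_singleton]

theorem potPar_iff : G.PotPar a b ↔ G.inU a b ∧
    (∀ γ C, a ∉ C → G.MuConnected C γ a → G.MuConnected C γ b) ∧
    (∀ γ δ C, a ∉ C → b ∈ C → G.MuConnected C γ b → G.MuConnected C a δ →
      G.MuConnected C γ δ) ∧
    (∀ γ C, a ∉ C → G.MuConnected (C ∪ {a}) b γ → G.MuConnected C b γ) := by
  simp only [PotPar, muSep_singleton, not_imp_not]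
  refine and_congr_right fun _ => and_congr_right fun _ => and_congr_left fun _ => ?_
  refine forall₃_congr fun γ δ C => forall₂_congr fun _ _ => ?_
  tauto

theorem potSib_iff : G.PotSib a b ↔ (G.inU b a ∧ G.inU a b) ∧
    (∀ γ C, b ∈ C → G.MuConnected C γ b → G.MuConnected C γ a) ∧
    (∀ γ C, a ∈ C → G.MuConnected C γ a → G.MuConnected C γ b) := by
  simp only [PotSib, muSep_singleton, not_imp_not]

theorem PotSib.symm (h : G.PotSib a b) : G.PotSib b a :=
  ⟨h.1.symm, h.2.2, h.2.1⟩

theorem potPar_of_dir (h : G.dir a b) : G.PotPar a b := by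
  refine potPar_iff.mpr ⟨inU_iff.mpr fun C ha => ?_, fun γ C ha hγ => ?_,
    fun γ δ C ha hb hγ hδ => ?_, fun γ C ha hγ => ?_⟩
  · exact (Reach.refl G C _ a).step (.dirF h) (nodeOpen_false_left.mpr ha)
  · exact hγ.step (.dirF h) (nodeOpen_false_right.mpr ha)
  · exact (hγ.step (.dirB h) (subset_anSet C hb)).trans hδ nofun
  · -- colliders that are ancestors of `a` only are bypassed through the edge `b ← a`
    have hb : b ∉ C ∪ {a} := hγ.not_mem
    have hba : G.Reach C (G.anSet C) b a false :=
      (Reach.refl G C _ b).step (.dirB h) (nodeOpen_false_left.mpr fun hbC => hb (Or.inl hbC))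
    obtain ⟨w, hw, he⟩ := hγ
    rw [anSet_union_singleton] at hw
    have key := Walk.openFrom_induction (R := G.Reach C (G.anSet C) b) (fun s m hR hx => ?_) w
      (Reach.refl G C _ b) hw
    · rwa [he] at key
    rcases hx.of_union Set.subset_union_left with hx | ⟨-, hxa, hxC⟩
    · exact hR.step s hx
    · exact (hba.revDirPath hxa hxC).step s
        (nodeOpen_false_left.mpr fun hc => hxC (subset_anSet C hc))

theorem potSib_of_bi (h : G.bi a b) : G.PotSib a b := by
  have h' := G.bi_symm a b h
  refine potSib_iff.mpr ⟨⟨inU_iff.mpr fun C hb => ?_, inU_iff.mpr fun C ha => ?_⟩,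
    fun γ C hb hγ => ?_, fun γ C ha hγ => ?_⟩
  · exact (Reach.refl G C _ b).step (.bid h') (nodeOpen_false_left.mpr hb)
  · exact (Reach.refl G C _ a).step (.bid h) (nodeOpen_false_left.mpr ha)
  · exact hγ.step (.bid h') (subset_anSet C hb)
  · exact hγ.step (.bid h) (subset_anSet C ha)

theorem sub_nGraph (G : DMG V) : Sub G G.NGraph :=
  ⟨fun _ _ => potPar_of_dir, fun _ _ h => Or.inl (potSib_of_bi h)⟩

theorem ext {G₁ G₂ : DMG V} (hd : G₁.dir = G₂.dir) (hb : G₁.bi = G₂.bi) :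
    G₁ = G₂ := by
  cases G₁; cases G₂; cases hd; cases hb; rfl

theorem MarkovEq.nGraph_eq {G₁ G₂ : DMG V} (h : MarkovEq G₁ G₂) :
    G₁.NGraph = G₂.NGraph := by
  have hsep : ∀ A B C, G₁.muSep A B C = G₂.muSep A B C := fun A B C => propext (h A B C)
  refine ext ?_ ?_ <;> funext a b <;>
    simp only [NGraph, PotPar, PotSib, inU, separable, hsep]

theorem sub_nGraph_of_markovEq {G' : DMG V} (h : MarkovEq G' G) : Sub G' G.NGraph :=
  h.nGraph_eq ▸ sub_nGraph G'

end Potential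

section AddEdge

variable {G : DMG V} {C : Set V} {a b γ δ : V} {m : Bool}

theorem PotSib.muConnected_across (h : G.PotSib a b) (hP : G.Reach C (G.anSet C) γ a m)
    (ha : NodeOpen C (G.anSet C) a m true) : G.MuConnected C γ b := by
  obtain ⟨⟨-, hu⟩, -, hs3⟩ := potSib_iff.mp h
  by_cases haC : a ∈ C
  · cases m
    · exact absurd haC (nodeOpen_false_left.mp ha)
    · exact hs3 γ C haC hP
  · exact hP.trans (inU_iff.mp hu C haC) fun hm => by subst hm; exact ha

theorem markovEq_addBi (h : G.PotSib a b) : MarkovEq (G.addBi a b) G := by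
  refine markovEq_of_sub (sub_addBi G a b) fun C γ δ ⟨w, hw, he⟩ => ?_
  have key := Walk.openFrom_induction (A := G.anSet C) (R := G.Reach C (G.anSet C) γ)
    (fun s m hR hx => ?_) w (.refl G C _ γ) hw
  · rwa [he] at key
  cases s with
  | dirF hd => exact hR.step (.dirF hd) hx
  | dirB hd => exact hR.step (.dirB hd) hx
  | bid hb =>
    rcases hb with hb | ⟨rfl, rfl⟩ | ⟨rfl, rfl⟩
    · exact hR.step (.bid hb) hx
    · exact h.muConnected_across hR hx
    · exact h.symm.muConnected_across hR hx

/-- Prepend a connection from `b` to `a`; if `a` becomes a collider, the walk connects given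
`C ∪ {a}` and (p4) applies. -/
theorem PotPar.muConnected_from_child (h : G.PotPar a b) (hbC : b ∉ C)
    (haδ : G.MuConnected C a δ) : G.MuConnected C b δ := by
  obtain ⟨hu, -, -, hp4⟩ := potPar_iff.mp h
  have haC : a ∉ C := haδ.not_mem
  obtain ⟨ν, hν, hνe⟩ := inU_iff.mp hu C haC
  obtain ⟨hν', -⟩ := ν.openFrom_reverse false false hν
    (by rw [hνe]; exact nodeOpen_false_right.mpr hbC)
  obtain ⟨ρ, hρ, hρa⟩ := ν.reverse.exists_prefix_avoiding hν'
  obtain ⟨y, t, w, hw, hwe, hwa⟩ : ∃ (y : V) (t : Step G a y) (w : Walk G y δ),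
      Walk.openFrom C (G.anSet C) t.headEnd w ∧ w.endHead t.headEnd = true ∧
        a ∉ w.nodes.dropLast := by
    obtain ⟨τ, hτ, hτe⟩ := haδ
    cases τ with
    | nil => exact absurd hτe Bool.false_ne_true
    | cons t w =>
      rcases w.avoiding_or_exists_suffix (a := a) hτ.2 with hwa | ⟨y, t', w', h₁, h₂, h₃⟩
      exacts [⟨_, t, w, hτ.2, hτe, hwa⟩, ⟨y, t', w', h₁, h₂.trans hτe, h₃⟩]
  by_cases hcol : (ρ.endHead false && t.headStart) = true
  · have hsub : G.anSet C ⊆ G.anSet (C ∪ {a}) := anSet_mono_right Set.subset_union_left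
    have hρ' := ρ.openFrom_union_singleton hsub hρ hρa
    exact hp4 δ C haC (Reach.append_cons ⟨ρ, hρ', rfl⟩ t w
      (nodeOpen_of_collider hcol (subset_anSet _ (Or.inr rfl)))
      (w.openFrom_union_singleton hsub hw hwa) hwe)
  · exact Reach.append_cons ⟨ρ, hρ, rfl⟩ t w (nodeOpen_of_not_mem haC (absurd · hcol))
      hw hwe

/-- At a collider that is an ancestor of `a` but not of `C` the walk is restarted at `a` along a
reversed directed path; the two pieces are rejoined through `b` using (p2) and either (p3) or
`muConnected_from_child`. -/
theorem PotPar.muConnected_of_reach (h : G.PotPar a b) (hb : b ∈ G.anSet C)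
    (hγδ : G.Reach C (G.anSet C ∪ {z | G.anc z a}) γ δ true) : G.MuConnected C γ δ := by
  obtain ⟨-, hp2, hp3, -⟩ := potPar_iff.mp h
  obtain ⟨w, hw, he⟩ := hγδ
  have key := Walk.openFrom_induction (R := fun z m => G.Reach C (G.anSet C) γ z m ∨
      (G.MuConnected C γ a ∧ G.Reach C (G.anSet C) a z m)) (fun s m hR hx => ?_) w
    (Or.inl (.refl G C _ γ)) hw
  · rw [he] at key
    rcases key with hγδ | ⟨hγa, haδ⟩
    · exact hγδ
    have haC : a ∉ C := haδ.not_mem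
    have hγb := hp2 γ C haC hγa
    by_cases hbC : b ∈ C
    · exact hp3 γ δ C haC hbC hγb haδ
    · exact hγb.trans (h.muConnected_from_child hbC haδ) fun _ => hb
  rcases hx.of_union subset_rfl with hx | ⟨hcol, hxa, hxC⟩
  · exact hR.imp (·.step s hx) (And.imp_right (·.step s hx))
  · refine Or.inr ⟨?_, ((Reach.refl G C _ a).revDirPath hxa hxC).step s
      (nodeOpen_false_left.mpr fun hc => hxC (subset_anSet C hc))⟩
    rcases hR with hR | ⟨hγa, -⟩
    · rw [(Bool.and_eq_true_iff.mp hcol).1] at hR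
      exact hR.dirPath hxa hxC
    · exact hγa

theorem PotPar.reach_addDir_forward (h : G.PotPar a b)
    (hP : G.Reach C ((G.addDir a b).anSet C) γ a m) (haC : a ∉ C) :
    G.Reach C ((G.addDir a b).anSet C) γ b true := by
  obtain ⟨hu, hp2, -, -⟩ := potPar_iff.mp h
  by_cases hm : m = true ∧ a ∉ (G.addDir a b).anSet C
  · obtain ⟨rfl, ha⟩ := hm
    rw [anSet_addDir_of_not_mem fun hb => ha (mem_anSet_addDir hb)] at hP ⊢
    exact hp2 γ C haC hP
  · exact hP.trans ((inU_iff.mp hu C haC).mono (anSet_mono (sub_addDir G a b) C))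
      fun hm' => not_not.mp (not_and.mp hm hm')

/-- `hP` is the part of the walk already rebuilt in `G`. A backward use `b ← a` of the new edge
is replaced by a reversed connection from `a` to `b` if `a` is an ancestor of `C` after adding
the edge; otherwise the rest of the walk is rebuilt from `a` and moved to `b` by
`muConnected_from_child`. -/
theorem PotPar.reach_addDir (h : G.PotPar a b) {x : V} (q : Walk (G.addDir a b) x δ)
    (hP : G.Reach C ((G.addDir a b).anSet C) γ x m)
    (hq : Walk.openFrom C ((G.addDir a b).anSet C) m q) (he : q.endHead m = true) :
    G.Reach C ((G.addDir a b).anSet C) γ δ true := by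
  induction q generalizing m γ with
  | nil => exact he ▸ hP
  | @cons x y _ s q ih =>
    obtain ⟨hx, hq⟩ := hq
    cases s with
    | dirF hd =>
      rcases hd with hd | ⟨hxa, hyb⟩
      · exact ih (hP.step (.dirF hd) hx) hq he
      subst x y
      exact ih (h.reach_addDir_forward hP (nodeOpen_false_right.mp hx)) hq he
    | bid hb => exact ih (hP.step (.bid hb) hx) hq he
    | dirB hd =>
      rcases hd with hd | ⟨hya, hxb⟩
      · exact ih (hP.step (.dirB hd) hx) hq he
      subst x y
      have haC : a ∉ C := Walk.not_mem_of_openFrom hq he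
      have hab := inU_iff.mp (potPar_iff.mp h).1 C haC
      by_cases haA : a ∈ (G.addDir a b).anSet C
      · obtain ⟨ν, hν, hνe⟩ := hab.mono (anSet_mono (sub_addDir G a b) C)
        obtain ⟨hν', -⟩ :=
          ν.openFrom_reverse false m hν (by rw [hνe]; exact NodeOpen.comm.mp hx)
        obtain ⟨hq', he'⟩ :=
          Walk.openFrom_of_mem_of_not_mem haA haC hq he (ν.reverse.endHead m)
        exact ih (hP.append ν.reverse hν') hq' he'
      · have hb : b ∉ G.anSet C := fun hb => haA (mem_anSet_addDir hb)
        have haδ := ih (Reach.refl G C _ a) hq he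
        rw [anSet_addDir_of_not_mem hb] at haδ hP hx ⊢
        exact hP.trans (h.muConnected_from_child (fun hbC => hb (subset_anSet C hbC)) haδ)
          fun hm => by subst hm; exact hx

theorem markovEq_addDir (h : G.PotPar a b) : MarkovEq (G.addDir a b) G := by
  refine markovEq_of_sub (sub_addDir G a b) fun C γ δ ⟨w, hw, he⟩ => ?_
  have hγδ := h.reach_addDir w (.refl G C _ γ) hw he
  by_cases hb : b ∈ G.anSet C
  · exact h.muConnected_of_reach hb (hγδ.mono (anSet_addDir_subset C))
  · rwa [anSet_addDir_of_not_mem hb] at hγδ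

end AddEdge

instance : Preorder (DMG V) where
  le := Sub
  le_refl _ := ⟨fun _ _ => id, fun _ _ => id⟩
  le_trans _ _ _ h h' :=
    ⟨fun x y hd => h'.1 x y (h.1 x y hd), fun x y hb => h'.2 x y (h.2 x y hb)⟩

section AddEdges

variable {G H : DMG V}

/-- `inl (x, y)` stands for the directed edge `x → y`, `inr (x, y)` for `x ↔ y`. -/
def HasEdge (G : DMG V) : (V × V) ⊕ (V × V) → Prop
  | .inl (x, y) => G.dir x y
  | .inr (x, y) => G.bi x y

def addEdge (G : DMG V) : (V × V) ⊕ (V × V) → DMG V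
  | .inl (x, y) => G.addDir x y
  | .inr (x, y) => G.addBi x y

def addEdges (G : DMG V) (l : List ((V × V) ⊕ (V × V))) : DMG V :=
  l.foldl addEdge G

theorem sub_of_hasEdge (h : ∀ e, G.HasEdge e → H.HasEdge e) : Sub G H :=
  ⟨fun x y => h (.inl (x, y)), fun x y => h (.inr (x, y))⟩

theorem Sub.hasEdge (hs : Sub G H) : ∀ {e}, G.HasEdge e → H.HasEdge e
  | .inl (x, y) => hs.1 x y
  | .inr (x, y) => hs.2 x y

theorem sub_addEdge (G : DMG V) : ∀ e, Sub G (G.addEdge e)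
  | .inl (x, y) => sub_addDir G x y
  | .inr (x, y) => sub_addBi G x y

theorem hasEdge_addEdge (G : DMG V) : ∀ e, (G.addEdge e).HasEdge e
  | .inl _ => Or.inr ⟨rfl, rfl⟩
  | .inr _ => Or.inr (Or.inl ⟨rfl, rfl⟩)

theorem sub_addEdges (G : DMG V) : ∀ l, Sub G (G.addEdges l)
  | [] => le_refl G
  | e :: l => le_trans (α := DMG V) (sub_addEdge G e) (sub_addEdges (G.addEdge e) l)

theorem hasEdge_addEdges {e} : ∀ (G : DMG V) {l}, e ∈ l → (G.addEdges l).HasEdge e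
  | G, _ :: l, .head _ => (sub_addEdges _ l).hasEdge (hasEdge_addEdge G e)
  | G, e' :: _, .tail _ he => hasEdge_addEdges (G.addEdge e') he

theorem markovEq_addEdge : ∀ {e}, G.NGraph.HasEdge e → MarkovEq (G.addEdge e) G
  | .inl _, h => markovEq_addDir h
  | .inr _, h => markovEq_addBi (h.elim id PotSib.symm)

theorem markovEq_addEdges :
    ∀ (G : DMG V) l, (∀ e ∈ l, G.NGraph.HasEdge e) → MarkovEq (G.addEdges l) G
  | _, [], _ => fun _ _ _ => Iff.rfl
  | G, e :: l, h =>
    have he := markovEq_addEdge (h e List.mem_cons_self)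
    (markovEq_addEdges (G.addEdge e) l fun e' he' =>
      he.nGraph_eq ▸ h e' (List.mem_cons_of_mem e he')).trans he

theorem markovEq_nGraph [Finite V] (G : DMG V) : MarkovEq G.NGraph G := by
  let l := (Set.toFinite {e | G.NGraph.HasEdge e}).toFinset.toList
  have hl : ∀ e, e ∈ l ↔ G.NGraph.HasEdge e := by simp [l]
  exact MarkovEq.of_sub_of_sub (sub_nGraph G)
    (sub_of_hasEdge fun e he => hasEdge_addEdges G ((hl e).mpr he))
    (markovEq_addEdges G l fun e => (hl e).mp)

end AddEdges

end DMG

/-- Theorem 2: the graph `N = N(I(G))` built from the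
potential parents and potential siblings of `I(G)` satisfies: (i)
`I(N) = I(G)`; (ii) `N` is a supergraph of every DMG Markov equivalent to
`G`; (iii) along any increasing finite sequence of DMGs from `G` to `N`,
every graph is Markov equivalent to `N`. -/
theorem stmt16 {V : Type u} [Fintype V] (G : DMG V) :
    DMG.MarkovEq (G.NGraph) G ∧
    (∀ G' : DMG V, DMG.MarkovEq G' G → DMG.Sub G' G.NGraph) ∧
    (∀ (m : ℕ) (Gs : Fin (m + 1) → DMG V),
      Gs 0 = G → Gs (Fin.last m) = G.NGraph →
      (∀ i : Fin m, DMG.Sub (Gs i.castSucc) (Gs i.succ)) →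
      ∀ i : Fin (m + 1), DMG.MarkovEq (Gs i) G.NGraph) := by
  have hN := DMG.markovEq_nGraph G
  refine ⟨hN, fun G' h => DMG.sub_nGraph_of_markovEq h, ?_⟩
  intro m Gs h0 hlast hstep i
  have hmono : Monotone Gs := Fin.monotone_iff_le_succ.mpr hstep
  subst h0
  exact (DMG.MarkovEq.of_sub_of_sub (hmono (Fin.zero_le i)) (hlast ▸ hmono (Fin.le_last i))
    hN).trans hN.symm
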